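/- arXiv:math/0502554 — 2 statements merged into one kernel-verified Lean document; each statement's English description precedes it below -/
import Mathlib

section
/- Let A → B be a ring homomorphism such that B is a finitely generated free A-module. Then for A-modules M and N, Hom_B(Hom_A(B,M), Hom_A(B,N)) is isomorphic to Hom_A(B, Hom_A(M,N)) as A-modules. -/
open CategoryTheory ModuleCat

/-!
Restriction of scalars is left adjoint to coextension, and the adjunction is `A`-linear on hom
modules, so `Hom_B(Hom_A(B,M), Hom_A(B,N)) ≅ Hom_A(Hom_A(B,M), N)`. A basis `ι` of `B` over `A`
identifies `Hom_A(B,M)` with `M^ι`, hence `Hom_A(M^ι, N) ≅ Hom_A(M,N)^ι ≅ Hom_A(B, Hom_A(M,N))`.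
-/

namespace ModuleCat

universe v w

-- Mathlib's `restrictCoextendScalarsAdj` needs `Y` and `(coextendScalars f).obj X` in one universe,
-- which fails for `M` and `N` of independent universes; so the adjunction is rebuilt on linear maps.
section Ring

variable {R S : Type*} [Ring R] [Ring S] {f : R →+* S} {Y : ModuleCat.{v} S}
  {X : ModuleCat.{w} R}

noncomputable def CoextendScalars.homToRestrictScalars (φ : Y →ₗ[S] (coextendScalars f).obj X) :
    (restrictScalars f).obj Y →ₗ[R] X where
  toFun (y : Y) := φ y (1 : S)
  map_add' (y y' : Y) := by
    change φ (y + y') (1 : S) = φ y (1 : S) + φ y' (1 : S)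
    rw [map_add]
    rfl
  map_smul' r (y : Y) := by
    change φ (f r • y) (1 : S) = r • φ y (1 : S)
    rw [map_smul, CoextendScalars.smul_apply, one_mul, ← mul_one (f r)]
    exact map_smul (CoextendScalars.equiv f X (φ y)) r
      (show (restrictScalars f).obj (of S S) from (1 : S))

noncomputable def RestrictScalars.homToCoextendScalars (σ : (restrictScalars f).obj Y →ₗ[R] X) :
    Y →ₗ[S] (coextendScalars f).obj X where
  toFun y := (CoextendScalars.equiv f X).symm
    { toFun (s : S) := σ (s • y)
      map_add' (s t : S) := by
        change σ ((s + t) • y) = σ (s • y) + σ (t • y)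
        rw [add_smul]
        exact map_add σ _ _
      map_smul' r (s : S) := by
        change σ ((f r * s) • y) = r • σ (s • y)
        rw [mul_smul]
        exact map_smul σ r (show (restrictScalars f).obj Y from s • y) }
  map_add' y y' := CoextendScalars.ext <| LinearMap.ext fun (s : S) => by
    change σ (s • (y + y')) = σ (s • y) + σ (s • y')
    rw [smul_add]
    exact map_add σ _ _
  map_smul' t y := CoextendScalars.ext <| LinearMap.ext fun (s : S) => by
    change σ (s • t • y) = σ ((s * t) • y)
    rw [mul_smul]

end Ring

variable {R S : Type*} [CommRing R] [CommRing S] (f : R →+* S)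

noncomputable def restrictScalarsHomCoextendScalarsEquiv (Y : ModuleCat.{v} S)
    (X : ModuleCat.{w} R) :
    (restrictScalars f).obj (of S (Y →ₗ[S] (coextendScalars f).obj X)) ≃ₗ[R]
      ((restrictScalars f).obj Y →ₗ[R] X) where
  toFun φ := CoextendScalars.homToRestrictScalars φ
  invFun := RestrictScalars.homToCoextendScalars
  map_add' _ _ := rfl
  map_smul' r (φ : Y →ₗ[S] (coextendScalars f).obj X) := LinearMap.ext fun (y : Y) => by
    change (f r • φ y) (1 : S) = r • φ y (1 : S)
    rw [← map_smul]
    exact map_smul (CoextendScalars.homToRestrictScalars φ) r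
      (show (restrictScalars f).obj Y from y)
  left_inv (φ : Y →ₗ[S] (coextendScalars f).obj X) :=
    LinearMap.ext fun y => CoextendScalars.ext <| LinearMap.ext fun (s : S) => by
      change φ (s • y) (1 : S) = φ y s
      rw [map_smul, CoextendScalars.smul_apply, one_mul]
  right_inv σ := LinearMap.ext fun (y : Y) => by
    change σ ((1 : S) • y) = σ y
    rw [one_smul]

noncomputable def restrictScalarsCoextendScalarsEquiv (X : ModuleCat.{w} R) :
    (restrictScalars f).obj ((coextendScalars f).obj X) ≃ₗ[R]
      ((restrictScalars f).obj (of S S) →ₗ[R] X) where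
  toFun g := CoextendScalars.equiv f X g
  invFun g := (CoextendScalars.equiv f X).symm g
  map_add' _ _ := rfl
  map_smul' r g := by
    refine LinearMap.ext fun (s : S) => ?_
    change CoextendScalars.equiv f X g (s * f r) = r • CoextendScalars.equiv f X g s
    rw [mul_comm]
    exact map_smul (CoextendScalars.equiv f X g) r
      (show (restrictScalars f).obj (of S S) from s)
  left_inv _ := rfl
  right_inv _ := rfl

noncomputable def restrictScalarsAlgebraMapSelfEquiv (A B : Type*) [CommRing A] [Ring B]
    [Algebra A B] :
    (restrictScalars (algebraMap A B)).obj (of B B) ≃ₗ[A] B where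
  toFun s := s
  invFun s := s
  map_add' _ _ := rfl
  map_smul' a s := (Algebra.smul_def a (show B from s)).symm
  left_inv _ := rfl
  right_inv _ := rfl

end ModuleCat

namespace Module.Basis

variable {R F M N ι : Type*} [CommSemiring R] [AddCommMonoid F] [Module R F] [AddCommMonoid M]
  [Module R M] [AddCommMonoid N] [Module R N] [Fintype ι]

open Classical in
noncomputable def linearMapLinearMapEquiv (b : Basis ι R F) :
    ((F →ₗ[R] M) →ₗ[R] N) ≃ₗ[R] (F →ₗ[R] M →ₗ[R] N) :=
  (b.constr R).symm.arrowCongr (LinearEquiv.refl R N) ≪≫ₗ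
    (LinearMap.lsum R (fun _ : ι => M) R).symm ≪≫ₗ b.constr R

end Module.Basis

/-- Let `A → B` be a ring homomorphism such that `B` is a finitely generated
free `A`-module.  Then for `A`-modules `M` and `N`, the `A`-module
`Hom_B(Hom_A(B,M), Hom_A(B,N))` (where `Hom_A(B,-)` carries its natural `B`-module structure,
given by `ModuleCat.coextendScalars`, and the `B`-module of `B`-linear homomorphisms is viewed
as an `A`-module by restriction of scalars) is isomorphic to `Hom_A(B, Hom_A(M,N))`
as `A`-modules. -/
theorem hom_coextend_coextend_iso_coextend_hom
    (A B : Type) [CommRing A] [CommRing B] [Algebra A B]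
    [Module.Free A B] [Module.Finite A B] (M N : ModuleCat A) :
    Nonempty
      ((ModuleCat.restrictScalars (algebraMap A B)).obj
          (ModuleCat.of B
            ((ModuleCat.coextendScalars (algebraMap A B)).obj M →ₗ[B]
              (ModuleCat.coextendScalars (algebraMap A B)).obj N)) ≅
        (ModuleCat.restrictScalars (algebraMap A B)).obj
          ((ModuleCat.coextendScalars (algebraMap A B)).obj
            (ModuleCat.of A (M →ₗ[A] N)))) := by
  let b := (Module.Free.chooseBasis A B).map (restrictScalarsAlgebraMapSelfEquiv A B).symm
  exact ⟨(restrictScalarsHomCoextendScalarsEquiv _ _ N ≪≫ₗ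
    (restrictScalarsCoextendScalarsEquiv _ M).arrowCongr (LinearEquiv.refl A N) ≪≫ₗ
    b.linearMapLinearMapEquiv ≪≫ₗ
    (restrictScalarsCoextendScalarsEquiv _ (ModuleCat.of A (M →ₗ[A] N))).symm).toModuleIso⟩
end

section
/- Let S be a commutative ring and x₁,…,x_r an S-regular sequence. For p ≥ 1, the multiplication-by-x₁^p map on S/(x₁, x₂^p, …, x_r^p) is zero, and there are short exact sequences 0 → S/(x₁, x₂^p,…,x_r^p) →^{x₁^p} S/(x₁^{p+1}, x₂^p,…,x_r^p) → S/(x₁^p, x₂^p,…,x_r^p) → 0 and 0 → S/(x₁^p,…,x_r^p) →^{x₁} S/(x₁^{p+1}, x₂^p,…,x_r^p) → S/(x₁, x₂^p,…,x_r^p) → 0. -/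
namespace RS19

variable {S : Type} [CommRing S]

def WR : Ideal S → List S → Prop
  | _, [] => True
  | I, z :: l => (∀ u : S, z * u ∈ I → u ∈ I) ∧ WR (I ⊔ Ideal.span {z}) l

lemma wr_top : ∀ l : List S, WR (⊤ : Ideal S) l
  | [] => trivial
  | z :: l => ⟨fun _ _ => Submodule.mem_top, by rw [top_sup_eq]; exact wr_top l⟩

lemma wr_congr {I J : Ideal S} {l : List S} (h : I = J) (hw : WR I l) : WR J l := h ▸ hw

lemma wr_prefix : ∀ (l₁ l₂ : List S) (I : Ideal S), WR I (l₁ ++ l₂) → WR I l₁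
  | [], _, _, _ => trivial
  | _ :: l₁, l₂, _, h => ⟨h.1, wr_prefix l₁ l₂ _ h.2⟩

lemma head_pow {I : Ideal S} {z : S} (h : ∀ u, z * u ∈ I → u ∈ I) :
    ∀ (c : ℕ) (u : S), z ^ c * u ∈ I → u ∈ I
  | 0, u, hu => by simpa using hu
  | c + 1, u, hu => h u (head_pow h c (z * u) (by rwa [← mul_assoc, ← pow_succ]))

lemma mem_sup_span {I : Ideal S} {a v : S} :
    v ∈ I ⊔ Ideal.span {a} ↔ ∃ m ∈ I, ∃ t : S, v = m + a * t := by
  rw [Submodule.mem_sup]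
  constructor
  · rintro ⟨m, hm, w, hw, rfl⟩
    obtain ⟨t, rfl⟩ := Ideal.mem_span_singleton'.mp hw
    exact ⟨m, hm, t, by ring⟩
  · rintro ⟨m, hm, t, rfl⟩
    exact ⟨m, hm, a * t, Ideal.mem_span_singleton'.mpr ⟨t, mul_comm t a⟩, rfl⟩

lemma wr_last : ∀ (l : List S) (J : Ideal S) (a : S), WR J (l ++ [a]) →
    ∀ v, a * v ∈ J ⊔ Ideal.ofList l → v ∈ J ⊔ Ideal.ofList l
  | [], J, a, h, v, hv => by
    simp only [Ideal.ofList_nil, sup_bot_eq] at hv ⊢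
    exact h.1 v hv
  | b :: l, J, a, h, v, hv => by
    rw [Ideal.ofList_cons, ← sup_assoc] at hv ⊢
    exact wr_last l (J ⊔ Ideal.span {b}) a h.2 v hv

/-- Colon statement: the first element of a weakly regular sequence can be cancelled
modulo the ideal generated by `p`-th powers of the remaining elements. -/
def Bst (l : List S) : Prop := ∀ (I : Ideal S) (z₀ : S) (p : ℕ) (u : S),
  WR I (z₀ :: l) → z₀ * u ∈ I ⊔ Ideal.ofList (l.map (· ^ p)) →
    u ∈ I ⊔ Ideal.ofList (l.map (· ^ p))

/-- Power statement: `p`-th powers of a weakly regular sequence are weakly regular. -/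
def Ast (l : List S) : Prop := ∀ (I : Ideal S) (p : ℕ), WR I l → WR I (l.map (· ^ p))

lemma L2 (z₀ : S) : ∀ (c : ℕ) (zs : List S) (I : Ideal S),
    (∀ l : List S, l.length ≤ zs.length → Bst l) → WR I (z₀ :: zs) →
    WR (I ⊔ Ideal.span {z₀ ^ c}) zs := by
  intro c
  induction c with
  | zero =>
    intro zs I _ _
    rw [pow_zero, Ideal.span_singleton_one, sup_top_eq]
    exact wr_top zs
  | succ c ihc =>
    intro zs
    induction zs with
    | nil => intro I _ _; trivial
    | cons w ws ihws =>
      intro I hB hwr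
      refine ⟨?_, ?_⟩
      · -- head: w is regular mod I ⊔ (z₀^(c+1))
        intro u hu
        obtain ⟨m, hm, t, ht⟩ := mem_sup_span.mp hu
        have h1 : u ∈ I ⊔ Ideal.span {z₀} := by
          apply hwr.2.1 u
          exact mem_sup_span.mpr ⟨m, hm, z₀ ^ c * t, by rw [ht]; ring⟩
        obtain ⟨m', hm', t', ht'⟩ := mem_sup_span.mp h1
        have h4 : z₀ * (w * t' - z₀ ^ c * t) ∈ I := by
          have he : z₀ * (w * t' - z₀ ^ c * t) = m - w * m' := by
            linear_combination ht - w * ht'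
          rw [he]
          exact Ideal.sub_mem I hm (Ideal.mul_mem_left I w hm')
        have h5 := hwr.1 _ h4
        have h6 : w * t' ∈ I ⊔ Ideal.span {z₀ ^ c} :=
          mem_sup_span.mpr ⟨w * t' - z₀ ^ c * t, h5, t, by ring⟩
        have h7 := (ihc (w :: ws) I hB hwr).1 t' h6
        obtain ⟨m'', hm'', t'', ht''⟩ := mem_sup_span.mp h7
        exact mem_sup_span.mpr ⟨m' + z₀ * m'',
          Ideal.add_mem I hm' (Ideal.mul_mem_left I _ hm''), t'', by rw [ht', ht'']; ring⟩
      · -- tail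
        have hswap : WR (I ⊔ Ideal.span {w}) (z₀ :: ws) := by
          refine ⟨?_, wr_congr (sup_right_comm I (Ideal.span {z₀}) (Ideal.span {w})) hwr.2.2⟩
          intro u hu
          have hb := hB [w] (by simp) I z₀ 1 u ⟨hwr.1, hwr.2.1, trivial⟩
          simp only [List.map_cons, List.map_nil, pow_one, Ideal.ofList_cons,
            Ideal.ofList_nil, sup_bot_eq] at hb
          exact hb hu
        have := ihws (I ⊔ Ideal.span {w})
          (fun l hl => hB l (le_trans hl (by simp))) hswap
        exact wr_congr (sup_right_comm I (Ideal.span {w}) (Ideal.span {z₀ ^ (c + 1)})) this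

end RS19

namespace RS19

variable {S : Type} [CommRing S]

lemma master : ∀ (n : ℕ) (l : List S), l.length ≤ n → Ast l ∧ Bst l := by
  intro n
  induction n with
  | zero =>
    intro l hl
    obtain rfl : l = [] := List.length_eq_zero_iff.mp (Nat.le_zero.mp hl)
    constructor
    · intro I p hwr; simp only [List.map_nil]; trivial
    · intro I z₀ p u hwr hu
      simp only [List.map_nil, Ideal.ofList_nil, sup_bot_eq] at hu ⊢
      exact hwr.1 u hu
  | succ n ih =>
    have hA : ∀ l : List S, l.length ≤ n + 1 → Ast l := by
      intro l hl I p hwr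
      match l, hl, hwr with
      | [], _, _ => trivial
      | z :: ls, hl, hwr =>
        simp only [List.map_cons]
        refine ⟨fun u hu => head_pow hwr.1 p u hu, ?_⟩
        have hlen : ls.length ≤ n := by simpa using hl
        have h2 : WR (I ⊔ Ideal.span {z ^ p}) ls :=
          L2 z p ls I (fun l' hl' => (ih l' (le_trans hl' hlen)).2) hwr
        exact (ih ls hlen).1 _ p h2
    intro l hl
    refine ⟨hA l hl, ?_⟩
    rcases l.eq_nil_or_concat with rfl | ⟨ws, w, rfl⟩
    · intro I z₀ p u hwr hu
      simp only [List.map_nil, Ideal.ofList_nil, sup_bot_eq] at hu ⊢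
      exact hwr.1 u hu
    · rw [List.concat_eq_append] at hl ⊢
      intro I z₀ p u hwr hu
      have hws : ws.length ≤ n := by
        have := hl; simp only [List.length_append, List.length_cons, List.length_nil] at this
        omega
      rw [List.map_append, Ideal.ofList_append, List.map_cons, List.map_nil,
        Ideal.ofList_cons, Ideal.ofList_nil, sup_bot_eq] at hu ⊢
      set K := Ideal.ofList (ws.map (· ^ p)) with hK
      rw [← sup_assoc] at hu
      obtain ⟨a, ha, t, hat⟩ := mem_sup_span.mp hu
      -- last-position regularity of w^p modulo (I ⊔ (z₀)) ⊔ K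
      have h1 : WR (I ⊔ Ideal.span {z₀}) ((ws ++ [w]).map (· ^ p)) :=
        hA (ws ++ [w]) hl _ p hwr.2
      rw [List.map_append, List.map_cons, List.map_nil] at h1
      have hlast := wr_last (ws.map (· ^ p)) (I ⊔ Ideal.span {z₀}) (w ^ p) h1
      have h2 : w ^ p * t ∈ (I ⊔ Ideal.span {z₀}) ⊔ K := by
        have hz : z₀ * u ∈ (I ⊔ Ideal.span {z₀}) ⊔ K :=
          Submodule.mem_sup_left (Submodule.mem_sup_right
            (Ideal.mul_mem_right u _ (Ideal.mem_span_singleton_self z₀)))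
        have haa : a ∈ (I ⊔ Ideal.span {z₀}) ⊔ K := by
          refine SetLike.le_def.mp ?_ ha
          exact sup_le_sup_right le_sup_left K
        have : w ^ p * t = z₀ * u - a := by linear_combination -hat
        rw [this]
        exact Submodule.sub_mem _ hz haa
      have h3 := hlast t h2
      rw [Submodule.mem_sup] at h3
      obtain ⟨b, hb, q₂, hq₂, htq⟩ := h3
      obtain ⟨m₂, hm₂, t₂, hb2⟩ := mem_sup_span.mp hb
      have h5 : z₀ * (u - w ^ p * t₂) ∈ I ⊔ K := by
        have he : z₀ * (u - w ^ p * t₂) = a + (w ^ p * m₂ + w ^ p * q₂) := by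
          linear_combination hat + (w ^ p) * htq.symm + (w ^ p) * hb2
        rw [he]
        refine Submodule.add_mem _ ha (Submodule.add_mem _ ?_ ?_)
        · exact Submodule.mem_sup_left (Ideal.mul_mem_left I _ hm₂)
        · exact Submodule.mem_sup_right (Ideal.mul_mem_left K _ hq₂)
      have h6 : WR I (z₀ :: ws) := wr_prefix (z₀ :: ws) [w] I hwr
      have h7 := (ih ws hws).2 I z₀ p _ h6 h5
      have heq : u = (u - w ^ p * t₂) + w ^ p * t₂ := by ring
      rw [heq]
      refine Submodule.add_mem _ ?_ ?_
      · exact SetLike.le_def.mp (sup_le_sup_left le_sup_left I) h7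
      · exact Submodule.mem_sup_right (Submodule.mem_sup_right
          (Ideal.mul_mem_right t₂ _ (Ideal.mem_span_singleton_self (w ^ p))))
      
lemma wr_of_pos : ∀ (l : List S) (I : Ideal S),
    (∀ (i : ℕ) (hi : i < l.length) (u : S),
      l[i] * u ∈ I ⊔ Ideal.ofList (l.take i) → u ∈ I ⊔ Ideal.ofList (l.take i)) → WR I l
  | [], _, _ => trivial
  | z :: l, I, h => by
    constructor
    · intro u hu
      have h0 := h 0 (by simp) u (by simpa using hu)
      simpa using h0
    · apply wr_of_pos l (I ⊔ Ideal.span {z})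
      intro i hi u hu
      have h2 := h (i + 1) (by simpa using hi) u (by
        simpa [Ideal.ofList_cons, ← sup_assoc] using hu)
      simpa [Ideal.ofList_cons, ← sup_assoc] using h2

lemma wr_of_isWeaklyRegular {l : List S} (h : RingTheory.Sequence.IsWeaklyRegular S l) :
    WR (⊥ : Ideal S) l := by
  apply wr_of_pos
  intro i hi u hu
  simp only [bot_sup_eq] at hu ⊢
  have hs := h.regular_mod_prev i hi
  set J := Ideal.ofList (l.take i) with hJdef
  have hJ : (J • ⊤ : Submodule S S) = J := by
    rw [smul_eq_mul, Ideal.mul_top]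
  have hmem : l[i] • u ∈ (J • ⊤ : Submodule S S) := by
    rw [hJ, smul_eq_mul]; exact hu
  have h1 : l[i] • (Submodule.Quotient.mk u : S ⧸ (J • ⊤ : Submodule S S)) = l[i] • 0 := by
    rw [smul_zero, ← Submodule.Quotient.mk_smul]
    exact (Submodule.Quotient.mk_eq_zero _).mpr hmem
  have h2 := hs h1
  have h3 := (Submodule.Quotient.mk_eq_zero _).mp h2
  rwa [hJ] at h3


/-- Decompose the range of a function on `Fin (k+1)`. -/
lemma finrange {T : Type} {k : ℕ} (F : Fin (k + 1) → T) :
    Set.range F = insert (F 0) (Set.range fun i : Fin k => F i.succ) := by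
  ext a
  simp only [Set.mem_range, Set.mem_insert_iff]
  constructor
  · rintro ⟨i, rfl⟩
    rcases Fin.eq_zero_or_eq_succ i with rfl | ⟨j, rfl⟩
    · exact Or.inl rfl
    · exact Or.inr ⟨j, rfl⟩
  · rintro (rfl | ⟨j, rfl⟩)
    exacts [⟨0, rfl⟩, ⟨j.succ, rfl⟩]

lemma mem_span_sup {a v : S} {K : Ideal S} :
    v ∈ Ideal.span {a} ⊔ K ↔ ∃ t m, m ∈ K ∧ v = a * t + m := by
  rw [sup_comm, mem_sup_span]
  constructor
  · rintro ⟨m, hm, t, rfl⟩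
    exact ⟨t, m, hm, by ring⟩
  · rintro ⟨t, m, hm, rfl⟩
    exact ⟨m, hm, t, by ring⟩

end RS19




/-- Let `S` be a commutative (Noetherian) ring and `x₁,…,x_r` an `S`-regular
sequence (`r ≥ 1`), and let `p ≥ 1`.  Write
`L = S/(x₁, x₂^p, …, x_r^p)`, `Q = S/(x₁^{p+1}, x₂^p, …, x_r^p)`, `P = S/(x₁^p, …, x_r^p)`.
Then multiplication by `x₁^p` is zero on `L`, and there are short exact sequences
`0 → L →(x₁^p) Q → P → 0` and `0 → P →(x₁) Q → L → 0`, where the injections are induced by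
multiplication by `x₁^p` resp. `x₁`, and the surjections are the natural quotient maps. -/
theorem regular_sequence_two_short_exact_sequences
    (S : Type) [CommRing S] [IsNoetherianRing S] (r : ℕ) (hr : 0 < r)
    (x : Fin r → S) (hreg : RingTheory.Sequence.IsRegular S (List.ofFn x))
    (p : ℕ) (hp : 1 ≤ p)
    (IL : Ideal S) (hIL : IL = Ideal.span (Set.range fun i : Fin r =>
      if i = ⟨0, hr⟩ then x i else x i ^ p))
    (IQ : Ideal S) (hIQ : IQ = Ideal.span (Set.range fun i : Fin r =>
      if i = ⟨0, hr⟩ then x i ^ (p + 1) else x i ^ p))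
    (IP : Ideal S) (hIP : IP = Ideal.span (Set.range fun i : Fin r => x i ^ p)) :
    -- multiplication by `x₁^p` is zero on `L = S ⧸ IL`
    (∀ y : S ⧸ IL, (x ⟨0, hr⟩ ^ p) • y = 0) ∧
    -- first short exact sequence `0 → L → Q → P → 0`
    (∃ (α : (S ⧸ IL) →ₗ[S] (S ⧸ IQ)) (β : (S ⧸ IQ) →ₗ[S] (S ⧸ IP)),
      (∀ s : S, α (Ideal.Quotient.mk IL s) =
        Ideal.Quotient.mk IQ (x ⟨0, hr⟩ ^ p * s)) ∧
      (∀ s : S, β (Ideal.Quotient.mk IQ s) = Ideal.Quotient.mk IP s) ∧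
      Function.Injective α ∧ Function.Exact α β ∧ Function.Surjective β) ∧
    -- second short exact sequence `0 → P → Q → L → 0`
    (∃ (γ : (S ⧸ IP) →ₗ[S] (S ⧸ IQ)) (δ : (S ⧸ IQ) →ₗ[S] (S ⧸ IL)),
      (∀ s : S, γ (Ideal.Quotient.mk IP s) =
        Ideal.Quotient.mk IQ (x ⟨0, hr⟩ * s)) ∧
      (∀ s : S, δ (Ideal.Quotient.mk IQ s) = Ideal.Quotient.mk IL s) ∧
      Function.Injective γ ∧ Function.Exact γ δ ∧ Function.Surjective δ) := by
  obtain ⟨k, rfl⟩ : ∃ k, r = k + 1 := ⟨r - 1, (Nat.succ_pred_eq_of_pos hr).symm⟩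
  have h00 : (⟨0, hr⟩ : Fin (k + 1)) = 0 := Fin.ext (by simp)
  set x0 : S := x ⟨0, hr⟩ with hx0def
  have hx00 : x0 = x 0 := congrArg x h00
  set J : Ideal S := Ideal.ofList ((List.ofFn fun i : Fin k => x i.succ).map (· ^ p)) with hJdef
  -- weak regularity of x0 :: tail
  have hwr : RS19.WR (⊥ : Ideal S) (x0 :: List.ofFn fun i : Fin k => x i.succ) := by
    have h1 := RS19.wr_of_isWeaklyRegular hreg.toIsWeaklyRegular
    rw [List.ofFn_succ] at h1
    rwa [hx00]
  -- the key colon fact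
  have claimD : ∀ u : S, x0 * u ∈ J → u ∈ J := by
    intro u hu
    have hB := (RS19.master (List.ofFn fun i : Fin k => x i.succ).length _ le_rfl).2
    have h2 := hB ⊥ x0 p u hwr (by rw [bot_sup_eq]; exact hu)
    rwa [bot_sup_eq] at h2
  have claimDpow : ∀ (c : ℕ) (u : S), x0 ^ c * u ∈ J → u ∈ J := RS19.head_pow claimD
  -- ideal identities
  have hJ' : J = Ideal.span (Set.range fun i : Fin k => x i.succ ^ p) := by
    rw [hJdef, List.map_ofFn]
    show Ideal.span _ = Ideal.span _
    congr 1
    ext a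
    rw [Set.mem_setOf_eq, List.mem_ofFn]
    rfl
  have hIL' : IL = Ideal.span {x0} ⊔ J := by
    rw [hIL, hJ']
    simp only [h00]
    have hset : (Set.range fun i : Fin (k + 1) => if i = 0 then x i else x i ^ p)
        = insert x0 (Set.range fun i : Fin k => x i.succ ^ p) := by
      rw [RS19.finrange fun i : Fin (k + 1) => if i = 0 then x i else x i ^ p]
      congr 1
    rw [hset, Ideal.span_insert]
  have hIQ' : IQ = Ideal.span {x0 ^ (p + 1)} ⊔ J := by
    rw [hIQ, hJ']
    simp only [h00]
    have hset : (Set.range fun i : Fin (k + 1) => if i = 0 then x i ^ (p + 1) else x i ^ p)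
        = insert (x0 ^ (p + 1)) (Set.range fun i : Fin k => x i.succ ^ p) := by
      rw [RS19.finrange fun i : Fin (k + 1) => if i = 0 then x i ^ (p + 1) else x i ^ p]
      congr 1
    rw [hset, Ideal.span_insert]
  have hIP' : IP = Ideal.span {x0 ^ p} ⊔ J := by
    rw [hIP, hJ']
    have hset : (Set.range fun i : Fin (k + 1) => x i ^ p)
        = insert (x0 ^ p) (Set.range fun i : Fin k => x i.succ ^ p) := by
      rw [RS19.finrange fun i : Fin (k + 1) => x i ^ p, hx00]
    rw [hset, Ideal.span_insert]
  -- simple memberships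
  have hx0_IL : x0 ∈ IL := by
    rw [hIL']
    exact Submodule.mem_sup_left (Ideal.mem_span_singleton_self x0)
  have hx0p_IL : x0 ^ p ∈ IL := by
    rw [hIL']
    exact Submodule.mem_sup_left (Ideal.mem_span_singleton.mpr (dvd_pow_self x0 (by omega)))
  have hx0p_IP : x0 ^ p ∈ IP := by
    rw [hIP']
    exact Submodule.mem_sup_left (Ideal.mem_span_singleton_self _)
  have hJ_le_IQ : J ≤ IQ := by rw [hIQ']; exact le_sup_right
  -- the two injectivity claims
  have claimA : ∀ s : S, x0 ^ p * s ∈ IQ → s ∈ IL := by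
    intro s hs
    rw [hIQ'] at hs
    obtain ⟨t, m, hm, he⟩ := RS19.mem_span_sup.mp hs
    have h1 : x0 ^ p * (s - x0 * t) ∈ J := by
      have : x0 ^ p * (s - x0 * t) = m := by linear_combination he
      rw [this]; exact hm
    have h2 := claimDpow p _ h1
    rw [hIL']
    exact RS19.mem_span_sup.mpr ⟨t, s - x0 * t, h2, by ring⟩
  have claimB : ∀ s : S, x0 * s ∈ IQ → s ∈ IP := by
    intro s hs
    rw [hIQ'] at hs
    obtain ⟨t, m, hm, he⟩ := RS19.mem_span_sup.mp hs
    have h1 : x0 * (s - x0 ^ p * t) ∈ J := by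
      have : x0 * (s - x0 ^ p * t) = m := by linear_combination he - (by ring : x0 ^ (p + 1) * t = x0 * (x0 ^ p * t))
      rw [this]; exact hm
    have h2 := claimD _ h1
    rw [hIP']
    exact RS19.mem_span_sup.mpr ⟨t, s - x0 ^ p * t, h2, by ring⟩
  -- multiplication facts for well-definedness
  have hILmul : ∀ s ∈ IL, x0 ^ p * s ∈ IQ := by
    intro s hs
    rw [hIL'] at hs
    obtain ⟨t, m, hm, rfl⟩ := RS19.mem_span_sup.mp hs
    rw [hIQ']
    exact RS19.mem_span_sup.mpr ⟨t, x0 ^ p * m, Ideal.mul_mem_left J _ hm, by ring⟩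
  have hIPmul : ∀ s ∈ IP, x0 * s ∈ IQ := by
    intro s hs
    rw [hIP'] at hs
    obtain ⟨t, m, hm, rfl⟩ := RS19.mem_span_sup.mp hs
    rw [hIQ']
    exact RS19.mem_span_sup.mpr ⟨t, x0 * m, Ideal.mul_mem_left J _ hm, by ring⟩
  have hIQ_le_IP : IQ ≤ IP := by
    intro s hs
    rw [hIQ'] at hs
    obtain ⟨t, m, hm, rfl⟩ := RS19.mem_span_sup.mp hs
    rw [hIP']
    exact RS19.mem_span_sup.mpr ⟨x0 * t, m, hm, by ring⟩
  have hIQ_le_IL : IQ ≤ IL := by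
    intro s hs
    rw [hIQ'] at hs
    obtain ⟨t, m, hm, rfl⟩ := RS19.mem_span_sup.mp hs
    rw [hIL']
    exact RS19.mem_span_sup.mpr ⟨x0 ^ p * t, m, hm, by ring⟩
  -- the four maps
  let α : (S ⧸ IL) →ₗ[S] (S ⧸ IQ) := Submodule.mapQ IL IQ (LinearMap.lsmul S S (x0 ^ p))
    (fun s hs => by simpa using hILmul s hs)
  let β : (S ⧸ IQ) →ₗ[S] (S ⧸ IP) := Submodule.mapQ IQ IP LinearMap.id
    (fun s hs => by simpa using hIQ_le_IP hs)
  let γ : (S ⧸ IP) →ₗ[S] (S ⧸ IQ) := Submodule.mapQ IP IQ (LinearMap.lsmul S S x0)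
    (fun s hs => by simpa using hIPmul s hs)
  let δ : (S ⧸ IQ) →ₗ[S] (S ⧸ IL) := Submodule.mapQ IQ IL LinearMap.id
    (fun s hs => by simpa using hIQ_le_IL hs)
  have hαeq : ∀ s : S, α (Ideal.Quotient.mk IL s) = Ideal.Quotient.mk IQ (x0 ^ p * s) := by
    intro s
    rw [← Ideal.Quotient.mk_eq_mk, ← Ideal.Quotient.mk_eq_mk]
    show Submodule.mapQ _ _ _ _ (Submodule.Quotient.mk s) = _
    rw [Submodule.mapQ_apply]
    simp [smul_eq_mul]
  have hβeq : ∀ s : S, β (Ideal.Quotient.mk IQ s) = Ideal.Quotient.mk IP s := by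
    intro s
    rw [← Ideal.Quotient.mk_eq_mk, ← Ideal.Quotient.mk_eq_mk]
    show Submodule.mapQ _ _ _ _ (Submodule.Quotient.mk s) = _
    rw [Submodule.mapQ_apply]
    rfl
  have hγeq : ∀ s : S, γ (Ideal.Quotient.mk IP s) = Ideal.Quotient.mk IQ (x0 * s) := by
    intro s
    rw [← Ideal.Quotient.mk_eq_mk, ← Ideal.Quotient.mk_eq_mk]
    show Submodule.mapQ _ _ _ _ (Submodule.Quotient.mk s) = _
    rw [Submodule.mapQ_apply]
    simp [smul_eq_mul]
  have hδeq : ∀ s : S, δ (Ideal.Quotient.mk IQ s) = Ideal.Quotient.mk IL s := by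
    intro s
    rw [← Ideal.Quotient.mk_eq_mk, ← Ideal.Quotient.mk_eq_mk]
    show Submodule.mapQ _ _ _ _ (Submodule.Quotient.mk s) = _
    rw [Submodule.mapQ_apply]
    rfl
  refine ⟨?_, ⟨α, β, hαeq, hβeq, ?_, ?_, ?_⟩, ⟨γ, δ, hγeq, hδeq, ?_, ?_, ?_⟩⟩
  · -- multiplication by x0^p is zero on L
    intro y
    obtain ⟨s, rfl⟩ := Submodule.Quotient.mk_surjective IL y
    rw [← Submodule.Quotient.mk_smul, Submodule.Quotient.mk_eq_zero]
    rw [smul_eq_mul]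
    exact Ideal.mul_mem_right s IL hx0p_IL
  · -- injectivity of α
    rw [← LinearMap.ker_eq_bot]
    refine (Submodule.eq_bot_iff _).mpr fun y hy => ?_
    obtain ⟨s, rfl⟩ := Submodule.Quotient.mk_surjective IL y
    rw [LinearMap.mem_ker] at hy
    rw [Ideal.Quotient.mk_eq_mk, hαeq s] at hy
    rw [Submodule.Quotient.mk_eq_zero]
    exact claimA s (Ideal.Quotient.eq_zero_iff_mem.mp hy)
  · -- exactness of α, β
    intro y
    obtain ⟨s, rfl⟩ := Submodule.Quotient.mk_surjective IQ y
    constructor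
    · intro h0
      rw [Ideal.Quotient.mk_eq_mk, hβeq s] at h0
      have hs : s ∈ IP := Ideal.Quotient.eq_zero_iff_mem.mp h0
      rw [hIP'] at hs
      obtain ⟨t, m, hm, rfl⟩ := RS19.mem_span_sup.mp hs
      refine ⟨Ideal.Quotient.mk IL t, ?_⟩
      rw [hαeq t, Ideal.Quotient.mk_eq_mk]
      rw [Ideal.Quotient.mk_eq_mk_iff_sub_mem]
      have : x0 ^ p * t - (x0 ^ p * t + m) = -m := by ring
      rw [this]
      exact Submodule.neg_mem _ (hJ_le_IQ hm)
    · rintro ⟨a, ha⟩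
      obtain ⟨t, rfl⟩ := Submodule.Quotient.mk_surjective IL a
      rw [← ha, Ideal.Quotient.mk_eq_mk, hαeq t, hβeq _]
      exact Ideal.Quotient.eq_zero_iff_mem.mpr (Ideal.mul_mem_right t IP hx0p_IP)
  · -- surjectivity of β
    intro y
    obtain ⟨s, rfl⟩ := Submodule.Quotient.mk_surjective IP y
    exact ⟨Ideal.Quotient.mk IQ s, hβeq s⟩
  · -- injectivity of γ
    rw [← LinearMap.ker_eq_bot]
    refine (Submodule.eq_bot_iff _).mpr fun y hy => ?_
    obtain ⟨s, rfl⟩ := Submodule.Quotient.mk_surjective IP y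
    rw [LinearMap.mem_ker] at hy
    rw [Ideal.Quotient.mk_eq_mk, hγeq s] at hy
    rw [Submodule.Quotient.mk_eq_zero]
    exact claimB s (Ideal.Quotient.eq_zero_iff_mem.mp hy)
  · -- exactness of γ, δ
    intro y
    obtain ⟨s, rfl⟩ := Submodule.Quotient.mk_surjective IQ y
    constructor
    · intro h0
      rw [Ideal.Quotient.mk_eq_mk, hδeq s] at h0
      have hs : s ∈ IL := Ideal.Quotient.eq_zero_iff_mem.mp h0
      rw [hIL'] at hs
      obtain ⟨t, m, hm, rfl⟩ := RS19.mem_span_sup.mp hs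
      refine ⟨Ideal.Quotient.mk IP t, ?_⟩
      rw [hγeq t, Ideal.Quotient.mk_eq_mk]
      rw [Ideal.Quotient.mk_eq_mk_iff_sub_mem]
      have : x0 * t - (x0 * t + m) = -m := by ring
      rw [this]
      exact Submodule.neg_mem _ (hJ_le_IQ hm)
    · rintro ⟨a, ha⟩
      obtain ⟨t, rfl⟩ := Submodule.Quotient.mk_surjective IP a
      rw [← ha, Ideal.Quotient.mk_eq_mk, hγeq t, hδeq _]
      exact Ideal.Quotient.eq_zero_iff_mem.mpr (Ideal.mul_mem_right t IL hx0_IL)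
  · -- surjectivity of δ
    intro y
    obtain ⟨s, rfl⟩ := Submodule.Quotient.mk_surjective IL y
    exact ⟨Ideal.Quotient.mk IQ s, hδeq s⟩
end
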